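/- If f and g both minimize the penalized sum of squares PENSS_{λ,m} over a convex set of C^m functions with λ > 0, then f(t_i) = g(t_i) for all data points t_i and D^m f = D^m g almost everywhere (i.e., ∫ (D^m f - D^m g)^2 = 0). -/

import Mathlib

/-!
The functional is a convex quadratic, so at the midpoint `h = (f + g) / 2` the parallelogram
identity gives
`PENSS h = (PENSS f + PENSS g) / 2 - (∑ i, (f tᵢ - g tᵢ)² + λ ∫ (Dᵐ f - Dᵐ g)²) / 4`.
If `f` and `g` are both minimizers over the convex set `S ∋ h`, the subtracted term is `≤ 0`;
being a sum of nonnegative terms with `λ > 0`, each of them vanishes.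
-/

open Finset MeasureTheory

lemma iteratedDeriv_smul_add_smul {m : ℕ} {f g : ℝ → ℝ} {x : ℝ}
    (hf : ContDiffAt ℝ m f x) (hg : ContDiffAt ℝ m g x) (a b : ℝ) :
    iteratedDeriv m (a • f + b • g) x = a * iteratedDeriv m f x + b * iteratedDeriv m g x := by
  have haf : ContDiffAt ℝ m (a • f) x := hf.const_smul a
  have hbg : ContDiffAt ℝ m (b • g) x := hg.const_smul b
  rw [iteratedDeriv_add haf hbg, iteratedDeriv_const_smul_field,
    iteratedDeriv_const_smul_field, smul_eq_mul, smul_eq_mul]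

lemma sq_sub_midpoint (y a b : ℝ) :
    (y - (2⁻¹ * a + 2⁻¹ * b)) ^ 2 = 2⁻¹ * (y - a) ^ 2 + 2⁻¹ * (y - b) ^ 2 - 4⁻¹ * (a - b) ^ 2 := by
  ring

lemma sum_sq_sub_midpoint {ι : Type*} (s : Finset ι) (y a b : ι → ℝ) :
    ∑ i ∈ s, (y i - (2⁻¹ * a i + 2⁻¹ * b i)) ^ 2 =
      2⁻¹ * ∑ i ∈ s, (y i - a i) ^ 2 + 2⁻¹ * ∑ i ∈ s, (y i - b i) ^ 2
        - 4⁻¹ * ∑ i ∈ s, (a i - b i) ^ 2 := by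
  simp only [sq_sub_midpoint, sum_sub_distrib, sum_add_distrib, mul_sum]

lemma intervalIntegral_sq_midpoint {μ : Measure ℝ} {u v : ℝ → ℝ} {a b : ℝ}
    (hu : IntervalIntegrable (fun s ↦ u s ^ 2) μ a b)
    (hv : IntervalIntegrable (fun s ↦ v s ^ 2) μ a b)
    (huv : IntervalIntegrable (fun s ↦ (u s - v s) ^ 2) μ a b) :
    ∫ s in a..b, (2⁻¹ * u s + 2⁻¹ * v s) ^ 2 ∂μ =
      2⁻¹ * ∫ s in a..b, u s ^ 2 ∂μ + 2⁻¹ * ∫ s in a..b, v s ^ 2 ∂μ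
        - 4⁻¹ * ∫ s in a..b, (u s - v s) ^ 2 ∂μ := by
  have hpt : ∀ s, (2⁻¹ * u s + 2⁻¹ * v s) ^ 2 =
      2⁻¹ * u s ^ 2 + 2⁻¹ * v s ^ 2 - 4⁻¹ * (u s - v s) ^ 2 := fun s ↦ by ring
  simp only [hpt]
  rw [intervalIntegral.integral_sub ((hu.const_mul _).add (hv.const_mul _)) (huv.const_mul _),
    intervalIntegral.integral_add (hu.const_mul _) (hv.const_mul _),
    intervalIntegral.integral_const_mul, intervalIntegral.integral_const_mul,
    intervalIntegral.integral_const_mul]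

/-- `PENSS_{λ,m}` with design points `t` and responses `y`. -/
noncomputable def penalizedSumSq {ι : Type*} [Fintype ι] (t y : ι → ℝ) (lam : ℝ) (m : ℕ)
    (f : ℝ → ℝ) : ℝ :=
  ∑ i, (y i - f (t i)) ^ 2 + lam * ∫ s in (0:ℝ)..1, iteratedDeriv m f s ^ 2

lemma penalizedSumSq_midpoint {ι : Type*} [Fintype ι] (t y : ι → ℝ) (lam : ℝ) {m : ℕ}
    {f g : ℝ → ℝ} (hf : ContDiff ℝ m f) (hg : ContDiff ℝ m g) :
    penalizedSumSq t y lam m ((2⁻¹ : ℝ) • f + (2⁻¹ : ℝ) • g) =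
      2⁻¹ * penalizedSumSq t y lam m f + 2⁻¹ * penalizedSumSq t y lam m g
        - 4⁻¹ * (∑ i, (f (t i) - g (t i)) ^ 2 +
          lam * ∫ s in (0:ℝ)..1, (iteratedDeriv m f s - iteratedDeriv m g s) ^ 2) := by
  have hDf : Continuous (iteratedDeriv m f) := hf.continuous_iteratedDeriv m le_rfl
  have hDg : Continuous (iteratedDeriv m g) := hg.continuous_iteratedDeriv m le_rfl
  have hD : iteratedDeriv m ((2⁻¹ : ℝ) • f + (2⁻¹ : ℝ) • g) =
      fun s ↦ 2⁻¹ * iteratedDeriv m f s + 2⁻¹ * iteratedDeriv m g s :=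
    funext fun s ↦ iteratedDeriv_smul_add_smul hf.contDiffAt hg.contDiffAt _ _
  have hint := intervalIntegral_sq_midpoint (μ := volume) ((hDf.pow 2).intervalIntegrable 0 1)
    ((hDg.pow 2).intervalIntegrable 0 1) (((hDf.sub hDg).pow 2).intervalIntegrable 0 1)
  simp only [penalizedSumSq, hD, hint, Pi.add_apply, Pi.smul_apply, smul_eq_mul,
    sum_sq_sub_midpoint]
  ring

/-- If `f` and `g` both minimize the penalized sum of squares over a convex set of `C^m`
functions with `λ > 0`, then they agree at all data points and their `m`-th derivatives agree
almost everywhere (the integral of the squared difference vanishes). -/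
theorem stmt_4 (n m : ℕ) (t y : Fin n → ℝ) (lam : ℝ) (hlam : 0 < lam)
    (PENSS : (ℝ → ℝ) → ℝ)
    (hPENSS : ∀ f : ℝ → ℝ, PENSS f =
      (∑ i, (y i - f (t i)) ^ 2) + lam * ∫ s in (0:ℝ)..1, (iteratedDeriv m f s) ^ 2)
    (S : Set (ℝ → ℝ)) (hSconv : Convex ℝ S)
    (hSC : ∀ h ∈ S, ContDiff ℝ (m : ℕ∞) h)
    (f g : ℝ → ℝ) (hfS : f ∈ S) (hgS : g ∈ S)
    (hfmin : ∀ h ∈ S, PENSS f ≤ PENSS h)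
    (hgmin : ∀ h ∈ S, PENSS g ≤ PENSS h) :
    (∀ i, f (t i) = g (t i)) ∧
      (∫ s in (0:ℝ)..1, (iteratedDeriv m f s - iteratedDeriv m g s) ^ 2) = 0 := by
  obtain rfl : PENSS = penalizedSumSq t y lam m := funext hPENSS
  have hmidS : (2⁻¹ : ℝ) • f + (2⁻¹ : ℝ) • g ∈ S :=
    hSconv hfS hgS (by norm_num) (by norm_num) (by norm_num)
  have hmid := penalizedSumSq_midpoint t y lam (hSC f hfS) (hSC g hgS)
  have hfh := hfmin _ hmidS
  have hgh := hgmin _ hmidS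
  have hQ : 0 ≤ ∑ i, (f (t i) - g (t i)) ^ 2 := sum_nonneg fun i _ ↦ sq_nonneg _
  have hD : 0 ≤ ∫ s in (0:ℝ)..1, (iteratedDeriv m f s - iteratedDeriv m g s) ^ 2 :=
    intervalIntegral.integral_nonneg zero_le_one fun s _ ↦ sq_nonneg _
  have hQ0 : ∑ i, (f (t i) - g (t i)) ^ 2 = 0 := by nlinarith
  refine ⟨fun i ↦ ?_, by nlinarith⟩
  have hi := (sum_eq_zero_iff_of_nonneg fun i _ ↦ sq_nonneg (f (t i) - g (t i))).1 hQ0 i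
    (mem_univ i)
  exact sub_eq_zero.1 (pow_eq_zero_iff two_ne_zero |>.1 hi)
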